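/- arXiv:1507.04387 — 2 statements merged into one kernel-verified Lean document; each statement's English description precedes it below -/
import Mathlib

section
/- Fix k₁ ∈ ℝ, k₂ > 0, λ₁ > 0, c > r > 0. For A > 0 let γ₁(A), γ̄₁(A) be as in the scaling γ₁ = a₁/A, γ̄₁ = ā₁/A, and g_A(x) = γ₁(A)e^{γ̄₁(A)x} + γ̄₁(A)e^{−γ₁(A)x}. Let b(A) > 0 be the unique solution of g_A(−b) = g_A(0)·c/r. Then b(A) = kA for some constant k > 0 independent of A; i.e., the optimal barrier is linear in the asset size. -/
/-!
Substituting `b = A y` turns the barrier equation `g_A(-b) = g_A(0) c / r` into an equation in `y`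
alone, since `A g_A(-A y) = a₁ e^{-ā₁ y} + ā₁ e^{a₁ y}` does not depend on `A`. As `a₁, ā₁ > 0`,
this function is strictly increasing on `[0, ∞)`, so `b(A) / A` is the same for every `A`.
-/

open Real Set

lemma abs_lt_sqrt_sq_add {x d : ℝ} (hd : 0 < d) : |x| < √(x ^ 2 + d) := by
  rw [← sqrt_sq_eq_abs]
  exact sqrt_lt_sqrt (sq_nonneg x) (lt_add_of_pos_right _ hd)

/-- `A * g_A(-A y)`, i.e. `(a₁ + ā₁) F(y)` in the notation of the paper. -/
noncomputable def barrierProfile (a abar y : ℝ) : ℝ :=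
  a * exp (-(abar * y)) + abar * exp (a * y)

lemma barrierProfile_zero (a abar : ℝ) : barrierProfile a abar 0 = a + abar := by
  simp [barrierProfile]

lemma barrierProfile_scale (a abar x : ℝ) {A : ℝ} (hA : A ≠ 0) :
    a / A * exp (abar / A * x) + abar / A * exp (-(a / A) * x) =
      barrierProfile a abar (-x / A) / A := by
  unfold barrierProfile
  field_simp

lemma hasDerivAt_barrierProfile (a abar y : ℝ) :
    HasDerivAt (barrierProfile a abar) (a * abar * (exp (a * y) - exp (-(abar * y)))) y := by
  have hneg : HasDerivAt (fun y : ℝ => -(abar * y)) (-abar) y := by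
    simpa using ((hasDerivAt_id y).const_mul abar).fun_neg
  have hpos : HasDerivAt (fun y : ℝ => a * y) a y := by
    simpa using (hasDerivAt_id y).const_mul a
  exact ((hneg.exp.const_mul a).fun_add (hpos.exp.const_mul abar)).congr_deriv (by ring)

lemma strictMonoOn_barrierProfile {a abar : ℝ} (ha : 0 < a) (habar : 0 < abar) :
    StrictMonoOn (barrierProfile a abar) (Ici 0) := by
  refine strictMonoOn_of_deriv_pos (convex_Ici 0)
    (fun y _ => (hasDerivAt_barrierProfile a abar y).continuousAt.continuousWithinAt) ?_
  intro y hy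
  rw [interior_Ici] at hy
  rw [(hasDerivAt_barrierProfile a abar y).deriv]
  have hexp : exp (-(abar * y)) < exp (a * y) :=
    exp_lt_exp.2 (by nlinarith [mem_Ioi.1 hy])
  exact mul_pos (mul_pos ha habar) (sub_pos.2 hexp)

lemma exists_eq_mul_of_injOn_div {f : ℝ → ℝ} (hf : InjOn f (Ioi 0)) {b : ℝ → ℝ} {C : ℝ}
    (hb : ∀ A : ℝ, 0 < A → 0 < b A ∧ f (b A / A) = C) :
    ∃ k : ℝ, 0 < k ∧ ∀ A : ℝ, 0 < A → b A = k * A := by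
  obtain ⟨hb1, hfb1⟩ := hb 1 one_pos
  rw [div_one] at hfb1
  refine ⟨b 1, hb1, fun A hA => ?_⟩
  obtain ⟨hbA, hfbA⟩ := hb A hA
  have hdiv : b A / A = b 1 := hf (div_pos hbA hA) hb1 (hfbA.trans hfb1.symm)
  rwa [div_eq_iff hA.ne'] at hdiv

theorem barrier_linear_in_asset_size_general (k1 k2 lam1 c r : ℝ) (hk2 : 0 < k2) (hlam : 0 < lam1)
    (a1 abar1 : ℝ)
    (ha1 : a1 = (Real.sqrt (k1 ^ 2 + 2 * k2 ^ 2 * lam1) + k1) / k2 ^ 2)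
    (habar1 : abar1 = (Real.sqrt (k1 ^ 2 + 2 * k2 ^ 2 * lam1) - k1) / k2 ^ 2)
    (gamma1 gammabar1 : ℝ → ℝ)
    (hgamma1 : ∀ A, gamma1 A = a1 / A) (hgammabar1 : ∀ A, gammabar1 A = abar1 / A)
    (g : ℝ → ℝ → ℝ)
    (hg : ∀ A x, g A x = gamma1 A * Real.exp (gammabar1 A * x) +
      gammabar1 A * Real.exp (-(gamma1 A) * x))
    (b : ℝ → ℝ)
    (hb : ∀ A : ℝ, 0 < A → 0 < b A ∧ g A (-(b A)) = g A 0 * (c / r)) :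
    ∃ k : ℝ, 0 < k ∧ ∀ A : ℝ, 0 < A → b A = k * A := by
  have hsqrt : |k1| < √(k1 ^ 2 + 2 * k2 ^ 2 * lam1) := abs_lt_sqrt_sq_add (by positivity)
  have ha1_pos : 0 < a1 := ha1 ▸ div_pos (by linarith [neg_abs_le k1]) (by positivity)
  have habar1_pos : 0 < abar1 := habar1 ▸ div_pos (by linarith [le_abs_self k1]) (by positivity)
  have hprofile : ∀ A : ℝ, 0 < A →
      0 < b A ∧ barrierProfile a1 abar1 (b A / A) = (a1 + abar1) * (c / r) := by
    intro A hA
    obtain ⟨hbA, heq⟩ := hb A hA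
    simp only [hg, hgamma1, hgammabar1, barrierProfile_scale _ _ _ hA.ne', neg_neg, neg_zero,
      zero_div, barrierProfile_zero] at heq
    refine ⟨hbA, ?_⟩
    field_simp at heq
    linear_combination heq
  exact exists_eq_mul_of_injOn_div
    ((strictMonoOn_barrierProfile ha1_pos habar1_pos).injOn.mono Ioi_subset_Ici_self) hprofile

theorem barrier_linear_in_asset_size (k1 k2 lam1 c r : ℝ) (hk2 : 0 < k2) (hlam : 0 < lam1)
    (hr : 0 < r) (hcr : r < c)
    (a1 abar1 : ℝ)
    (ha1 : a1 = (Real.sqrt (k1 ^ 2 + 2 * k2 ^ 2 * lam1) + k1) / k2 ^ 2)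
    (habar1 : abar1 = (Real.sqrt (k1 ^ 2 + 2 * k2 ^ 2 * lam1) - k1) / k2 ^ 2)
    (gamma1 gammabar1 : ℝ → ℝ)
    (hgamma1 : ∀ A, gamma1 A = a1 / A) (hgammabar1 : ∀ A, gammabar1 A = abar1 / A)
    (g : ℝ → ℝ → ℝ)
    (hg : ∀ A x, g A x = gamma1 A * Real.exp (gammabar1 A * x) +
      gammabar1 A * Real.exp (-(gamma1 A) * x))
    (b : ℝ → ℝ)
    (hb : ∀ A : ℝ, 0 < A → 0 < b A ∧ g A (-(b A)) = g A 0 * (c / r)) :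
    ∃ k : ℝ, 0 < k ∧ ∀ A : ℝ, 0 < A → b A = k * A :=
  barrier_linear_in_asset_size_general k1 k2 lam1 c r hk2 hlam a1 abar1 ha1 habar1 gamma1 gammabar1
    hgamma1 hgammabar1 g hg b hb
end

section
/- Let b > 0, r, c > 0 with c > r, γ₁, γ̄₁ > 0, g(x) = γ₁ e^{γ̄₁ x} + γ̄₁ e^{−γ₁ x}, and suppose g(−b) = g(0)c/r. Define v₁(x) = (r/g′(b)) g(x) + (c/g′(−b)) g(x−b) for 0 ≤ x ≤ b. Then v₁′ is continuous on [0,b] and for all x ∈ [0,b], r ≤ v₁′(x) ≤ c. -/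
/-!
Both `g` and `v₁` are combinations of `e^{γ̄₁ x}` and `e^{-γ₁ x}`, hence so is
`v₁'' = α g''(x) + β g''(x - b)`. Since `g'(0) = 0`, the weights `α = r / g'(b)`, `β = c / g'(-b)` give
`v₁'(0) = c` and `v₁'(b) = r`, and the barrier condition is exactly `v₁''(b) = 0`. Shifting by `-b`
multiplies the `e^{γ̄₁ x}` part of `g''` by `e^{-γ̄₁ b} < 1` and its `e^{-γ₁ x}` part by `e^{γ₁ b} > 1`;
as `β < 0`, the relative weight of `e^{γ̄₁ x}` in `v₁''` exceeds that of `e^{-γ₁ x}`, and `v₁''(b) = 0`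
forces the two weights to have opposite signs. So `v₁''` is nondecreasing, `v₁'' ≤ 0` on `(-∞, b]`, and
`v₁'` decreases from `c` to `r` on `[0, b]`.
-/

open Real Set

theorem hasDerivAt_add_shift {f f' : ℝ → ℝ} (hf : ∀ x, HasDerivAt f (f' x) x) (α β b x : ℝ) :
    HasDerivAt (fun x => α * f x + β * f (x - b)) (α * f' x + β * f' (x - b)) x :=
  ((hf x).const_mul α).add (((hf (x - b)).comp_sub_const x b).const_mul β)

noncomputable def expComb (p q κ μ x : ℝ) : ℝ := p * exp (κ * x) + q * exp (μ * x)

section expComb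

variable {p q κ μ : ℝ}

theorem hasDerivAt_expComb (x : ℝ) :
    HasDerivAt (expComb p q κ μ) (expComb (p * κ) (q * μ) κ μ x) x := by
  have hκ := ((hasDerivAt_id x).const_mul κ).exp.const_mul p
  have hμ := ((hasDerivAt_id x).const_mul μ).exp.const_mul q
  refine (hκ.add hμ).congr_deriv ?_
  simp only [expComb, id, mul_one]
  ring

theorem expComb_pos (hp : 0 < p) (hq : 0 < q) (x : ℝ) : 0 < expComb p q κ μ x := by
  unfold expComb
  positivity

theorem continuous_expComb : Continuous (expComb p q κ μ) := by
  unfold expComb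
  fun_prop

theorem expComb_add_shift (α β b x : ℝ) :
    α * expComb p q κ μ x + β * expComb p q κ μ (x - b) =
      expComb (p * (α + β * exp (-(κ * b)))) (q * (α + β * exp (-(μ * b)))) κ μ x := by
  have hshift (ν : ℝ) : exp (ν * (x - b)) = exp (ν * x) * exp (-(ν * b)) := by
    rw [← exp_add]; ring_nf
  simp only [expComb, hshift]
  ring

theorem monotone_expComb (hp : 0 ≤ p) (hκ : 0 ≤ κ) (hq : q ≤ 0) (hμ : μ ≤ 0) :
    Monotone (expComb p q κ μ) := by
  intro x y hxy
  have hκxy : exp (κ * x) ≤ exp (κ * y) := exp_le_exp.2 (mul_le_mul_of_nonneg_left hxy hκ)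
  have hμxy : exp (μ * y) ≤ exp (μ * x) := exp_le_exp.2 (mul_le_mul_of_nonpos_left hxy hμ)
  exact add_le_add (mul_le_mul_of_nonneg_left hκxy hp) (mul_le_mul_of_nonpos_left hμxy hq)

theorem expComb_add_shift_nonpos {α β b x : ℝ} (hp : 0 < p) (hq : 0 < q) (hκ : 0 ≤ κ) (hμ : μ ≤ 0)
    (hβ : β ≤ 0) (hb : 0 ≤ b) (hzero : α * expComb p q κ μ b + β * expComb p q κ μ 0 = 0)
    (hx : x ≤ b) : α * expComb p q κ μ x + β * expComb p q κ μ (x - b) ≤ 0 := by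
  set P := α + β * exp (-(κ * b))
  set Q := α + β * exp (-(μ * b))
  have hQP : Q ≤ P := by
    have : exp (-(κ * b)) ≤ exp (-(μ * b)) := exp_le_exp.2 (by nlinarith)
    exact add_le_add_right (mul_le_mul_of_nonpos_left this hβ) α
  have hzero' : expComb (p * P) (q * Q) κ μ b = 0 := by
    rw [← expComb_add_shift, sub_self]
    exact hzero
  have hEκ := exp_pos (κ * b)
  have hEμ := exp_pos (μ * b)
  have hQ : Q ≤ 0 := by
    by_contra! hQ
    have hP : 0 < P := hQ.trans_le hQP
    have : 0 < expComb (p * P) (q * Q) κ μ b := by unfold expComb; positivity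
    linarith
  have hP : 0 ≤ P := by
    have hqQ : q * Q * exp (μ * b) ≤ 0 :=
      mul_nonpos_of_nonpos_of_nonneg (mul_nonpos_of_nonneg_of_nonpos hq.le hQ) hEμ.le
    unfold expComb at hzero'
    nlinarith [mul_pos hp hEκ]
  rw [expComb_add_shift, ← hzero']
  exact monotone_expComb (mul_nonneg hp.le hP) hκ (mul_nonpos_of_nonneg_of_nonpos hq.le hQ) hμ hx

end expComb

section barrier

variable {γ γ' : ℝ}

/-- The paper's `g(x) = γ₁ e^{γ̄₁ x} + γ̄₁ e^{-γ₁ x}`, with `γ = γ₁` and `γ' = γ̄₁`. -/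
noncomputable abbrev barrierG (γ γ' : ℝ) : ℝ → ℝ := expComb γ γ' γ' (-γ)

noncomputable abbrev barrierG' (γ γ' : ℝ) : ℝ → ℝ := expComb (γ * γ') (γ' * -γ) γ' (-γ)

noncomputable abbrev barrierG'' (γ γ' : ℝ) : ℝ → ℝ :=
  expComb (γ * γ' * γ') (γ' * -γ * -γ) γ' (-γ)

theorem barrierG'_zero : barrierG' γ γ' 0 = 0 := by
  simp only [expComb, mul_zero, exp_zero]
  ring

theorem barrierG''_zero : barrierG'' γ γ' 0 = γ * γ' * barrierG γ γ' 0 := by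
  simp only [expComb, mul_zero, exp_zero]
  ring

theorem barrierG'_pos (hγ : 0 < γ) (hγ' : 0 < γ') {x : ℝ} (hx : 0 < x) : 0 < barrierG' γ γ' x := by
  have : exp (-γ * x) < exp (γ' * x) := exp_lt_exp.2 (by nlinarith)
  simp only [expComb]
  nlinarith [mul_pos hγ hγ']

theorem barrierG'_neg (hγ : 0 < γ) (hγ' : 0 < γ') {x : ℝ} (hx : x < 0) : barrierG' γ γ' x < 0 := by
  have : exp (γ' * x) < exp (-γ * x) := exp_lt_exp.2 (by nlinarith)
  simp only [expComb]
  nlinarith [mul_pos hγ hγ']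

theorem barrierG''_mul_barrierG'_neg_add (x : ℝ) :
    barrierG'' γ γ' x * barrierG' γ γ' (-x) + γ * γ' * barrierG' γ γ' x * barrierG γ γ' (-x) = 0 := by
  have hA : exp (γ' * -x) = (exp (γ' * x))⁻¹ := by rw [← exp_neg, neg_mul_eq_mul_neg]
  have hB : exp (-γ * x) = (exp (-γ * -x))⁻¹ := by rw [← exp_neg]; ring_nf
  simp only [expComb, hA, hB]
  field_simp
  ring

/-- The barrier condition `g(-b) = g(0) c / r` says exactly that `v₁''(b) = 0`. -/
theorem barrier_condition_second_deriv {b r c : ℝ} (hr : r ≠ 0) (hb₁ : barrierG' γ γ' b ≠ 0)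
    (hb₂ : barrierG' γ γ' (-b) ≠ 0) (hbar : barrierG γ γ' (-b) = barrierG γ γ' 0 * (c / r)) :
    r / barrierG' γ γ' b * barrierG'' γ γ' b + c / barrierG' γ γ' (-b) * barrierG'' γ γ' 0 = 0 := by
  have hbar' : c * barrierG γ γ' 0 = r * barrierG γ γ' (-b) := by rw [hbar]; field_simp
  rw [barrierG''_zero, div_mul_eq_mul_div, div_mul_eq_mul_div, div_add_div _ _ hb₁ hb₂,
    div_eq_zero_iff]
  left
  linear_combination r * barrierG''_mul_barrierG'_neg_add b + γ * γ' * barrierG' γ γ' b * hbar'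

theorem pos_of_barrier_condition (hγ : 0 < γ) (hγ' : 0 < γ') {b r c : ℝ} (hr : 0 < r)
    (hbar : barrierG γ γ' (-b) = barrierG γ γ' 0 * (c / r)) : 0 < c := by
  have hpos : 0 < barrierG γ γ' (-b) := expComb_pos hγ hγ' _
  rw [hbar] at hpos
  exact (div_pos_iff_of_pos_right hr).1 (pos_of_mul_pos_right hpos (expComb_pos hγ hγ' 0).le)

theorem barrier_second_deriv_nonpos (hγ : 0 < γ) (hγ' : 0 < γ') {b r c x : ℝ} (hb : 0 < b)
    (hr : 0 < r) (hbar : barrierG γ γ' (-b) = barrierG γ γ' 0 * (c / r)) (hx : x ≤ b) :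
    r / barrierG' γ γ' b * barrierG'' γ γ' x + c / barrierG' γ γ' (-b) * barrierG'' γ γ' (x - b)
      ≤ 0 := by
  have hb₁ := barrierG'_pos hγ hγ' hb
  have hb₂ := barrierG'_neg hγ hγ' (neg_neg_of_pos hb)
  have hc := pos_of_barrier_condition hγ hγ' hr hbar
  exact expComb_add_shift_nonpos (by positivity)
    (by simpa only [mul_neg, neg_mul, neg_neg] using mul_pos (mul_pos hγ' hγ) hγ) hγ'.le
    (by linarith) (div_nonpos_of_nonneg_of_nonpos hc.le hb₂.le) hb.le
    (barrier_condition_second_deriv hr.ne' hb₁.ne' hb₂.ne hbar) hx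

end barrier

theorem v1_deriv_bounds_general (b r c gamma1 gammabar1 : ℝ) (hb : 0 < b)
    (hr : 0 < r)
    (h1 : 0 < gamma1) (h2 : 0 < gammabar1)
    (g : ℝ → ℝ)
    (hg : ∀ x, g x = gamma1 * Real.exp (gammabar1 * x) + gammabar1 * Real.exp (-gamma1 * x))
    (hbar : g (-b) = g 0 * (c / r))
    (v1 : ℝ → ℝ)
    (hv1 : ∀ x, v1 x = r / deriv g b * g x + c / deriv g (-b) * g (x - b)) :
    ContinuousOn (deriv v1) (Set.Icc 0 b) ∧
      ∀ x ∈ Set.Icc (0 : ℝ) b, r ≤ deriv v1 x ∧ deriv v1 x ≤ c := by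
  obtain rfl : g = barrierG gamma1 gammabar1 := funext hg
  have hg' : ∀ x, HasDerivAt (barrierG gamma1 gammabar1) (barrierG' gamma1 gammabar1 x) x :=
    hasDerivAt_expComb
  have hg'' : ∀ x, HasDerivAt (barrierG' gamma1 gammabar1) (barrierG'' gamma1 gammabar1 x) x :=
    hasDerivAt_expComb
  simp only [fun x => (hg' x).deriv] at hv1
  set V := fun x => r / barrierG' gamma1 gammabar1 b * barrierG' gamma1 gammabar1 x +
    c / barrierG' gamma1 gammabar1 (-b) * barrierG' gamma1 gammabar1 (x - b)
  have hv1' : deriv v1 = V := by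
    rw [funext hv1]
    exact funext fun x => (hasDerivAt_add_shift hg' _ _ b x).deriv
  have hVcont : Continuous V := by
    have : Continuous (barrierG' gamma1 gammabar1) := continuous_expComb
    fun_prop
  have hanti : AntitoneOn V (Icc 0 b) := by
    refine antitoneOn_of_hasDerivWithinAt_nonpos (convex_Icc 0 b) hVcont.continuousOn
      (fun x _ => (hasDerivAt_add_shift hg'' _ _ b x).hasDerivWithinAt) fun x hx => ?_
    rw [interior_Icc] at hx
    exact barrier_second_deriv_nonpos h1 h2 hb hr hbar hx.2.le
  have hV0 : V 0 = c := by simp [V, barrierG'_zero, (barrierG'_neg h1 h2 (neg_neg_of_pos hb)).ne]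
  have hVb : V b = r := by simp [V, barrierG'_zero, (barrierG'_pos h1 h2 hb).ne']
  rw [hv1']
  exact ⟨hVcont.continuousOn, fun x hx => hVb ▸ hV0 ▸ hanti.mapsTo_Icc hx⟩

theorem v1_deriv_bounds (b r c gamma1 gammabar1 : ℝ) (hb : 0 < b)
    (hr : 0 < r) (hcr : r < c)
    (h1 : 0 < gamma1) (h2 : 0 < gammabar1)
    (g : ℝ → ℝ)
    (hg : ∀ x, g x = gamma1 * Real.exp (gammabar1 * x) + gammabar1 * Real.exp (-gamma1 * x))
    (hbar : g (-b) = g 0 * (c / r))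
    (v1 : ℝ → ℝ)
    (hv1 : ∀ x, v1 x = r / deriv g b * g x + c / deriv g (-b) * g (x - b)) :
    ContinuousOn (deriv v1) (Set.Icc 0 b) ∧
      ∀ x ∈ Set.Icc (0 : ℝ) b, r ≤ deriv v1 x ∧ deriv v1 x ≤ c :=
  v1_deriv_bounds_general b r c gamma1 gammabar1 hb hr h1 h2 g hg hbar v1 hv1
end
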